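/- arXiv:math/0611120 — 2 statements merged into one kernel-verified Lean document; each statement's English description precedes it below -/
import Mathlib

section
/- For every positive integer p, every primitive p-th root of unity ω_p ∈ ℂ, and every r ∈ ℤ, the identity x_2^{-1} δ( ω_p^r ((x_1−x_0)/x_2)^{1/p} ) = x_1^{-1} δ( ω_p^{−r} ((x_2+x_0)/x_1)^{1/p} ) holds as an identity of formal series in the variables x_0, x_1^{1/p}, x_2^{1/p}, where ((x_1−x_0)/x_2)^{1/p} means (x_1−x_0)^{1/p} x_2^{−1/p} with (x_1−x_0)^{1/p} expanded in nonnegative integral powers of x_0, and ((x_2+x_0)/x_1)^{1/p} means (x_2+x_0)^{1/p} x_1^{−1/p} with (x_2+x_0)^{1/p} expanded in nonnegative integral powers of x_0. -/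
/-!
Both coefficients are generalized binomial coefficients in `a`, and they are related by upper
negation `binom(a - 1 - z, a) = (-1)^a binom(z, a)` with `z = (A + pa)/p`, which turns
`(-A - p)/p` into `(A + pa)/p`. The root-of-unity factors agree because the exponents
`r(A + pa)` and `r(A + p)` differ by a multiple of `p`.
-/

noncomputable section

open scoped BigOperators

/-- Generalized binomial coefficient `z(z-1)⋯(z-k+1)/k!`. -/
def cbinom (z : ℂ) (k : ℕ) : ℂ :=
  (∏ j ∈ Finset.range k, (z - (j : ℂ))) / (k.factorial : ℂ)

/-- Generalized binomial coefficient with integer lower index (zero for negative index). -/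
def cbinomZ (z : ℂ) (k : ℤ) : ℂ := if 0 ≤ k then cbinom z k.toNat else 0

lemma cbinom_eq_choose (z : ℂ) (n : ℕ) : cbinom z n = Ring.choose z n := by
  rw [cbinom, ← descPochhammer_eval_eq_prod_range,
    div_eq_iff (by exact_mod_cast n.factorial_ne_zero), mul_comm, ← nsmul_eq_mul,
    ← Ring.descPochhammer_eq_factorial_smul_choose, ← Polynomial.aeval_eq_smeval]
  simp [Polynomial.aeval_def, Polynomial.eval₂_eq_eval_map, descPochhammer_map]

lemma cbinom_natCast_sub_one_sub (z : ℂ) (n : ℕ) :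
    cbinom (n - 1 - z) n = (-1) ^ n * cbinom z n := by
  have h := Ring.choose_neg (z - n + 1) n
  rw [show -(z - n + 1) = (n : ℂ) - 1 - z by ring, show z - n + 1 + n - 1 = z by ring] at h
  rw [cbinom_eq_choose, cbinom_eq_choose, h, Units.smul_def, Int.negOnePow_def]
  simp

lemma cbinomZ_intCast_sub_one_sub (z : ℂ) (k : ℤ) :
    cbinomZ (k - 1 - z) k = (-1) ^ k * cbinomZ z k := by
  unfold cbinomZ
  split_ifs with hk
  · lift k to ℕ using hk
    simpa using cbinom_natCast_sub_one_sub z k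
  · rw [mul_zero]

lemma IsPrimitiveRoot.zpow_add_mul {M : Type*} [CommGroupWithZero M] {ω : M} {p : ℕ}
    (hω : IsPrimitiveRoot ω p) (hp : 0 < p) (m k : ℤ) : ω ^ (m + p * k) = ω ^ m := by
  rw [zpow_add₀ (hω.ne_zero hp.ne'), zpow_mul, hω.zpow_eq_one, one_zpow, mul_one]

/-- The identity is stated coefficientwise: both sides are the coefficients of
`x₀^a x₁^{A/p} x₂^{B/p}`, which vanish unless `B = -A - pa - p` and `a ≥ 0`. -/
theorem statement13 (p : ℕ) (hp : 0 < p) (ωp : ℂ) (hωp : IsPrimitiveRoot ωp p) (r : ℤ) :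
    ∀ a A B : ℤ,
      (if B = -A - (p : ℤ) * a - p then
          (-1 : ℂ) ^ a * ωp ^ (r * (A + (p : ℤ) * a)) *
            cbinomZ (((A : ℂ) + (p : ℂ) * (a : ℂ)) / (p : ℂ)) a
        else 0)
      = (if B = -A - (p : ℤ) * a - p then
          ωp ^ (r * (A + (p : ℤ))) * cbinomZ ((-(A : ℂ) - (p : ℂ)) / (p : ℂ)) a
        else 0) := by
  intro a A B
  congr 1
  have hω : ωp ^ (r * (A + p * a)) = ωp ^ (r * (A + p)) := by
    rw [show r * (A + p * a) = r * (A + p) + p * (r * (a - 1)) by ring,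
      hωp.zpow_add_mul hp]
  have hz : (-(A : ℂ) - p) / p = a - 1 - (A + p * a) / p := by
    field_simp [show (p : ℂ) ≠ 0 by exact_mod_cast hp.ne']
    ring
  rw [hω, hz, cbinomZ_intCast_sub_one_sub]
  ring
end
end

section
/- Let M be a complex vector space with a linear map Y_M(·,x) satisfying the truncation condition and the twisted Jacobi identity. Then for all u, v ∈ V and w ∈ M there exist k(u,v) ∈ ℕ and l(u,w) ∈ (1/p)ℕ such that for every integer k ≥ k(u,v) and every l ∈ (1/p)ℤ with l ≥ l(u,w): (weak commutativity) (x_1−x_2)^{k} Y_M(u,x_1)Y_M(v,x_2) = (x_1−x_2)^{k} Y_M(v,x_2)Y_M(u,x_1), and (twisted weak associativity) P_{[[x_0,x_0^{-1}]]} ( (x_0+x_2)^{l} Y_M(u,x_0+x_2)Y_M(v,x_2)w ) = (x_2+x_0)^{l} (1/p) ∑_{r=0}^{p−1} ω_p^{−lrp} Y_M(Y(ν^r u, x_0)v, x_2)w. -/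
/-!
Both properties are special coefficients of the twisted Jacobi identity.

For weak commutativity take the `x₀`-exponent `n = k`, with `k` beyond the truncation bounds of
`Y(ν^r u, x) v` for `r < p`: the right-hand side vanishes, and the reflection `i ↦ k - i`, under
which `(-1)^i C(k,i)` changes by `(-1)^k`, turns one left-hand sum into the other.

For weak associativity take `n = -m-1` and `a = L`, with `L` beyond the truncation bound of
`Y_M(u,x) w`: the modes `u^ν_{L/p+i} w` vanish and kill the second left-hand sum, and the first
one is the left-hand side of weak associativity once its double series is summed along
antidiagonals with Chu–Vandermonde, `∑_{q₁+q₂=i} C(l,q₁) C(m+i-l,q₂) = C(m+i,i) = (-1)^i C(-m-1,i)`.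
-/

noncomputable section

open scoped BigOperators

/-- A vertex operator algebra `(V, Y, 𝟙, ω)` over `ℂ`, described in terms of the modes
`vₙ = Y v n` of the vertex operators `Y(v,x) = ∑ₙ vₙ x^{-n-1}`.  The Jacobi identity is
expressed in its equivalent component (Borcherds identity) form: it is the equality of the
coefficients of `x₀^{-n-1} x₁^{-a-1} x₂^{-b-1}` on the two sides of the formal-variable
Jacobi identity, with all binomials expanded by the binomial expansion convention. -/
structure VOA (V : Type) [AddCommGroup V] [Module ℂ V] where
  Y : V →ₗ[ℂ] ℤ → Module.End ℂ V
  vac : V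
  conf : V
  cc : ℂ
  grade : ℤ → Submodule ℂ V
  internal : DirectSum.IsInternal grade
  findim : ∀ n : ℤ, FiniteDimensional ℂ (grade n)
  bddBelow : ∃ N : ℤ, ∀ n < N, grade n = ⊥
  trunc : ∀ u v : V, ∃ N : ℤ, ∀ n ≥ N, Y u n v = 0
  vacuum : ∀ n : ℤ, Y vac n = if n = -1 then 1 else 0
  creation_zero : ∀ (v : V) (n : ℤ), 0 ≤ n → Y v n vac = 0
  creation_id : ∀ v : V, Y v (-1) vac = v
  virasoro : ∀ m n : ℤ,
    Y conf (m + 1) * Y conf (n + 1) - Y conf (n + 1) * Y conf (m + 1)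
      = ((m - n : ℤ) : ℂ) • Y conf (m + n + 1)
        + (if m + n = 0 then ((m ^ 3 - m : ℤ) : ℂ) / 12 * cc else 0) •
            (1 : Module.End ℂ V)
  L0_grade : ∀ n : ℤ, ∀ v ∈ grade n, Y conf 1 v = (n : ℂ) • v
  L_neg_one : ∀ (u : V) (n : ℤ), Y (Y conf 0 u) n = (-n : ℂ) • Y u (n - 1)
  jacobi : ∀ (u v w : V) (a n b : ℤ),
    (∑ᶠ i : ℕ, cbinom (a : ℂ) i • Y (Y u (n + i) v) (a + b - i) w)
      = (∑ᶠ i : ℕ, ((-1 : ℂ) ^ i * cbinom (n : ℂ) i) • Y u (a + n - i) (Y v (b + i) w))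
        - (-1 : ℂ) ^ n •
            (∑ᶠ i : ℕ, ((-1 : ℂ) ^ i * cbinom (n : ℂ) i) • Y v (b + n - i) (Y u (a + i) w))

variable {V W : Type} [AddCommGroup V] [Module ℂ V] [AddCommGroup W] [Module ℂ W]

/-- Truncation condition for a module-type vertex operator map. -/
def TruncW (YW : V →ₗ[ℂ] ℤ → Module.End ℂ W) : Prop :=
  ∀ (v : V) (w : W), ∃ N : ℤ, ∀ n ≥ N, YW v n w = 0

/-- The Jacobi identity for a module map `Y_W`, in component form. -/
def JacobiW (𝒜 : VOA V) (YW : V →ₗ[ℂ] ℤ → Module.End ℂ W) : Prop :=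
  ∀ (u v : V) (w : W) (a n b : ℤ),
    (∑ᶠ i : ℕ, cbinom (a : ℂ) i • YW (𝒜.Y u (n + i) v) (a + b - i) w)
      = (∑ᶠ i : ℕ, ((-1 : ℂ) ^ i * cbinom (n : ℂ) i) • YW u (a + n - i) (YW v (b + i) w))
        - (-1 : ℂ) ^ n •
            (∑ᶠ i : ℕ, ((-1 : ℂ) ^ i * cbinom (n : ℂ) i) • YW v (b + n - i) (YW u (a + i) w))

section Twisted

variable {V M : Type} [AddCommGroup V] [Module ℂ V] [AddCommGroup M] [Module ℂ M]

/-- Truncation condition for a twisted-module-type vertex operator map.  Here, for a fixed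
period `p`, the map `Y_M` is encoded by its modes in `(1/p)ℤ`, rescaled by `p`:
`YM v N` is the mode `v^ν_{N/p}`, the coefficient of `x^{-N/p-1}` in `Y_M(v,x)`. -/
def TwTrunc (YM : V →ₗ[ℂ] ℤ → Module.End ℂ M) : Prop :=
  ∀ (v : V) (w : M), ∃ N : ℤ, ∀ n ≥ N, YM v n w = 0

/-- The twisted Jacobi identity in component form: the equality of the coefficients of
`x₀^{-n-1} x₁^{-a/p-1} x₂^{-b/p-1}` on the two sides of the twisted Jacobi identity,
with all binomials expanded by the binomial expansion convention. -/
def TwJacobi (p : ℕ) (𝒜 : VOA V) (ν : V ≃ₗ[ℂ] V) (ωp : ℂ)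
    (YM : V →ₗ[ℂ] ℤ → Module.End ℂ M) : Prop :=
  ∀ (u v : V) (w : M) (n a b : ℤ),
    (∑ᶠ i : ℕ, ((-1 : ℂ) ^ i * cbinom (n : ℂ) i) •
        YM u (a + (p : ℤ) * (n - i)) (YM v (b + (p : ℤ) * i) w))
      - (-1 : ℂ) ^ n •
          (∑ᶠ i : ℕ, ((-1 : ℂ) ^ i * cbinom (n : ℂ) i) •
            YM v (b + (p : ℤ) * (n - i)) (YM u (a + (p : ℤ) * i) w))
      = (p : ℂ)⁻¹ • ∑ r ∈ Finset.range p, ωp ^ (-(r : ℤ) * a) •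
          (∑ᶠ i : ℕ, cbinom ((a : ℂ) / (p : ℂ)) i •
            YM (𝒜.Y ((ν ^ r) u) (n + i) v) (a + b - (p : ℤ) * i) w)

/-- Weak commutativity for twisted vertex operators with exponent `k`:
`(x₁-x₂)^k Y_M(u,x₁)Y_M(v,x₂) = (x₁-x₂)^k Y_M(v,x₂)Y_M(u,x₁)`, as the equality of the
coefficients of `x₁^{a/p} x₂^{b/p}` (endomorphism-valued). -/
def TwWC (p : ℕ) (YM : V →ₗ[ℂ] ℤ → Module.End ℂ M) (k : ℕ) (u v : V) : Prop :=
  ∀ a b : ℤ,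
    (∑ᶠ i : ℕ, ((-1 : ℂ) ^ i * cbinom (k : ℂ) i) •
        (YM u ((p : ℤ) * ((k : ℤ) - i) - a - p) * YM v ((p : ℤ) * i - b - p)))
      = ∑ᶠ i : ℕ, ((-1 : ℂ) ^ i * cbinom (k : ℂ) i) •
          (YM v ((p : ℤ) * i - b - p) * YM u ((p : ℤ) * ((k : ℤ) - i) - a - p))

/-- Modified weak associativity for twisted vertex operators with exponent `k`:
`lim_{x₁^{1/p} → ωₚ^s (x₂+x₀)^{1/p}} ((x₁-x₂)^k Y_M(u,x₁)Y_M(v,x₂))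
   = x₀^k Y_M(Y(ν^{-s}u,x₀)v,x₂)` for all `s ∈ ℤ`, stated as the equality of the
coefficients of `x₀^n x₂^{C/p}` applied to an arbitrary vector `w`.  In the formal limit,
each integral power of `x₁^{1/p}` is replaced by the corresponding binomially expanded
power of `ωₚ^s (x₂+x₀)^{1/p}`. -/
def TwMWA (p : ℕ) (𝒜 : VOA V) (ν : V ≃ₗ[ℂ] V) (ωp : ℂ)
    (YM : V →ₗ[ℂ] ℤ → Module.End ℂ M) (k : ℕ) (u v : V) : Prop :=
  ∀ (s n C : ℤ) (w : M),
    (∑ᶠ a : ℤ, (ωp ^ (s * a) * cbinomZ ((a : ℂ) / (p : ℂ)) n) •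
        (∑ᶠ i : ℕ, ((-1 : ℂ) ^ i * cbinom (k : ℂ) i) •
          YM u ((p : ℤ) * ((k : ℤ) - i) - a - p)
            (YM v ((p : ℤ) * i - (C - a + (p : ℤ) * n) - p) w)))
      = YM (𝒜.Y ((ν ^ (-s)) u) ((k : ℤ) - n - 1) v) (-C - p) w

end Twisted

section Binomial

open Finset

lemma cbinom_eq_ringChoose (z : ℂ) (k : ℕ) : cbinom z k = Ring.choose z k := by
  rw [Ring.choose_eq_smul, ← Polynomial.aeval_eq_smeval, Polynomial.aeval_def,
    Polynomial.eval₂_eq_eval_map, descPochhammer_map, descPochhammer_eval_eq_prod_range,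
    cbinom, smul_eq_mul, div_eq_inv_mul]

lemma cbinom_natCast (n k : ℕ) : cbinom n k = n.choose k := by
  rw [cbinom_eq_ringChoose, Ring.choose_natCast]

lemma cbinom_natCast_of_lt {n k : ℕ} (h : n < k) : cbinom n k = 0 := by
  rw [cbinom_natCast, Nat.choose_eq_zero_of_lt h, Nat.cast_zero]

lemma sum_antidiagonal_cbinom_mul (x y : ℂ) (k : ℕ) :
    ∑ q ∈ antidiagonal k, cbinom x q.1 * cbinom y q.2 = cbinom (x + y) k := by
  simp only [cbinom_eq_ringChoose]
  exact (Ring.add_choose_eq k (Commute.all x y)).symm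

lemma neg_one_pow_mul_cbinom_neg_sub_one (z : ℂ) (k : ℕ) :
    (-1) ^ k * cbinom (-z - 1) k = cbinom (z + k) k := by
  rw [cbinom_eq_ringChoose, cbinom_eq_ringChoose, ← neg_add', Ring.choose_neg, Units.smul_def,
    Int.coe_negOnePow_natCast, zsmul_eq_mul, ← mul_assoc, Int.cast_pow, Int.cast_neg,
    Int.cast_one, ← mul_pow, neg_one_mul, neg_neg, one_pow, one_mul, add_right_comm,
    add_sub_cancel_right]

end Binomial

section Finsum

open Finset

lemma finsum_eq_sum_range_of_eq_zero {N : Type*} [AddCommMonoid N] (f : ℕ → N) (B : ℕ)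
    (h : ∀ i, B ≤ i → f i = 0) :
    ∑ᶠ i, f i = ∑ i ∈ range B, f i :=
  finsum_eq_finsetSum_of_support_subset f fun i hi =>
    mem_range.mpr (lt_of_not_ge fun hBi => hi (h i hBi))

variable {N : Type*} [AddCommGroup N] [Module ℂ N]

lemma finsum_mul_cbinom_natCast_smul_eq_sum_range (k : ℕ) (c : ℕ → ℂ) (g : ℕ → N) :
    ∑ᶠ i, (c i * cbinom k i) • g i = ∑ i ∈ range (k + 1), (c i * cbinom k i) • g i :=
  finsum_eq_sum_range_of_eq_zero _ _ fun i hi => by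
    rw [cbinom_natCast_of_lt (by omega), mul_zero, zero_smul]

lemma sum_range_neg_one_pow_mul_cbinom_smul_reflect (k : ℕ) (g : ℤ → ℤ → N) :
    ∑ i ∈ range (k + 1), ((-1) ^ i * cbinom k i) • g (k - i) i
      = (-1 : ℂ) ^ k • ∑ i ∈ range (k + 1), ((-1) ^ i * cbinom k i) • g i (k - i) := by
  rw [← sum_range_reflect, smul_sum]
  refine sum_congr rfl fun j hj => ?_
  have hjk : j ≤ k := Nat.lt_succ_iff.mp (mem_range.mp hj)
  have hsign : (-1 : ℂ) ^ (k - j) = (-1) ^ k * (-1) ^ j := by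
    rw [← pow_sub_mul_pow (-1 : ℂ) hjk, mul_assoc, ← mul_pow, neg_one_mul, neg_neg, one_pow,
      mul_one]
  rw [Nat.add_sub_cancel, Nat.cast_sub hjk, sub_sub_cancel, smul_smul, cbinom_natCast,
    cbinom_natCast, Nat.choose_symm hjk, hsign, mul_assoc]

lemma finsum_smul_add_eq_sum_range_antidiagonal (c : ℕ → ℕ × ℕ → ℂ) (T : ℕ → N) (B : ℕ)
    (hT : ∀ i, B ≤ i → T i = 0) :
    ∑ᶠ q : ℕ × ℕ, c (q.1 + q.2) q • T (q.1 + q.2)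
      = ∑ i ∈ range B, (∑ q ∈ antidiagonal i, c i q) • T i := by
  have hdisj : (range B : Set ℕ).PairwiseDisjoint antidiagonal := fun x _ y _ hxy =>
    disjoint_left.mpr fun q hx hy => hxy ((mem_antidiagonal.mp hx).symm.trans
      (mem_antidiagonal.mp hy))
  have hsupp : Function.support (fun q : ℕ × ℕ => c (q.1 + q.2) q • T (q.1 + q.2))
      ⊆ ((range B).biUnion antidiagonal : Finset (ℕ × ℕ)) := fun q hq =>
    mem_biUnion.mpr ⟨q.1 + q.2,
      mem_range.mpr (lt_of_not_ge fun h => hq (by simp only [hT _ h, smul_zero])),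
      mem_antidiagonal.mpr rfl⟩
  rw [finsum_eq_finsetSum_of_support_subset _ hsupp, sum_biUnion hdisj]
  refine sum_congr rfl fun i _ => ?_
  rw [sum_smul]
  exact sum_congr rfl fun q hq => by rw [mem_antidiagonal.mp hq]

end Finsum

lemma exists_nat_forall_ge_of_exists_int {P : ℤ → Prop} (h : ∃ N : ℤ, ∀ n ≥ N, P n) :
    ∃ K : ℕ, ∀ n : ℤ, K ≤ n → P n :=
  let ⟨N, hN⟩ := h
  ⟨N.toNat, fun n hn => hN n ((Int.self_le_toNat N).trans hn)⟩

lemma VOA.exists_nat_forall_ge_Y_eq_zero {V : Type} [AddCommGroup V] [Module ℂ V] (𝒜 : VOA V)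
    (f : ℕ → V) (v : V) (p : ℕ) : ∃ K : ℕ, ∀ r < p, ∀ n : ℤ, K ≤ n → 𝒜.Y (f r) n v = 0 := by
  induction p with
  | zero => exact ⟨0, fun r hr => absurd hr (Nat.not_lt_zero r)⟩
  | succ q ih =>
    obtain ⟨K, hK⟩ := ih
    obtain ⟨K', hK'⟩ := exists_nat_forall_ge_of_exists_int (𝒜.trunc (f q) v)
    refine ⟨max K K', fun r hr n hn => ?_⟩
    rcases Nat.lt_succ_iff_lt_or_eq.mp hr with hr | rfl
    · exact hK r hr n (le_trans (by exact_mod_cast le_max_left K K') hn)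
    · exact hK' n (le_trans (by exact_mod_cast le_max_right K K') hn)

section S19

variable {V M : Type} [AddCommGroup V] [Module ℂ V] [AddCommGroup M] [Module ℂ M]

/-- Twisted weak associativity with exponent `l = L/p ∈ (1/p)ℤ`, for a fixed triple
`u, v, w`:
`P_{[[x₀,x₀⁻¹]]} ((x₀+x₂)^l Y_M(u,x₀+x₂)Y_M(v,x₂)w)
   = (x₂+x₀)^l (1/p) ∑_{r=0}^{p-1} ωₚ^{-lrp} Y_M(Y(ν^r u,x₀)v,x₂)w`,
stated as the equality of the coefficients of `x₀^m x₂^{c/p}` for all integers `m`. -/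
def TwWA (p : ℕ) (𝒜 : VOA V) (ν : V ≃ₗ[ℂ] V) (ωp : ℂ)
    (YM : V →ₗ[ℂ] ℤ → Module.End ℂ M) (L : ℤ) (u v : V) (w : M) : Prop :=
  ∀ m c : ℤ,
    (∑ᶠ q : ℕ × ℕ,
        (cbinom ((L : ℂ) / (p : ℂ)) q.1 *
          cbinom ((m : ℂ) + (q.1 : ℂ) + (q.2 : ℂ) - (L : ℂ) / (p : ℂ)) q.2) •
        YM u (L - (p : ℤ) * (m + 1 + q.1 + q.2))
          (YM v ((p : ℤ) * ((q.1 : ℤ) + q.2) - p - c) w))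
      = (p : ℂ)⁻¹ • ∑ r ∈ Finset.range p, ωp ^ (-(L * r)) •
          (∑ᶠ i : ℕ, cbinom ((L : ℂ) / (p : ℂ)) i •
            YM (𝒜.Y ((ν ^ r) u) ((i : ℤ) - m - 1) v) (L - (p : ℤ) * i - p - c) w)

section TwistedJacobi

open Finset

variable {p : ℕ} {𝒜 : VOA V} {ν : V ≃ₗ[ℂ] V} {ωp : ℂ} {YM : V →ₗ[ℂ] ℤ → Module.End ℂ M}

theorem twWC_of_twJacobi (hJ : TwJacobi p 𝒜 ν ωp YM) {k : ℕ} {u v : V}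
    (hk : ∀ r < p, ∀ n : ℤ, k ≤ n → 𝒜.Y ((ν ^ r) u) n v = 0) : TwWC p YM k u v := by
  intro a b
  ext w
  have hjac := hJ u v w k (-a - p) (-b - p)
  have hmodes : ∀ r ∈ range p, ∀ i : ℕ, 𝒜.Y ((ν ^ r) u) ((k : ℤ) + i) v = 0 :=
    fun r hr i => hk r (mem_range.mp hr) _ (by omega)
  rw [sum_eq_zero fun r hr => by simp only [hmodes r hr, map_zero, Pi.zero_apply,
    LinearMap.zero_apply, smul_zero, finsum_zero], smul_zero, sub_eq_zero] at hjac
  have hreflect := sum_range_neg_one_pow_mul_cbinom_smul_reflect k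
    fun j i => YM v (-b - p + p * j) (YM u (-a - p + p * i) w)
  simp only [Int.cast_natCast, zpow_natCast, finsum_mul_cbinom_natCast_smul_eq_sum_range] at hjac
  rw [hreflect, smul_smul, ← mul_pow, neg_one_mul, neg_neg, one_pow, one_smul] at hjac
  simp only [finsum_mul_cbinom_natCast_smul_eq_sum_range, LinearMap.sum_apply, LinearMap.smul_apply,
    Module.End.mul_apply]
  convert hjac using 6 <;> ring

theorem twWA_of_twJacobi (hp : 0 < p) (hT : TwTrunc YM) (hJ : TwJacobi p 𝒜 ν ωp YM) {L : ℤ}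
    {u v : V} {w : M} (hu : ∀ n : ℤ, L ≤ n → YM u n w = 0) : TwWA p 𝒜 ν ωp YM L u v w := by
  intro m c
  obtain ⟨N, hN⟩ := hT v w
  set B := (N + p + c).toNat
  have hB : ∀ i : ℕ, B ≤ i → YM v (p * i - p - c) w = 0 := fun i hi => hN _ (by
    have : N + p + c ≤ i := (Int.self_le_toNat _).trans (by exact_mod_cast hi)
    nlinarith [(Int.natCast_nonneg i : (0 : ℤ) ≤ i), (by exact_mod_cast hp : (1 : ℤ) ≤ p)])
  set T : ℕ → M := fun i => YM u (L - p * (m + 1 + i)) (YM v (p * i - p - c) w)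
  have hTB : ∀ i, B ≤ i → T i = 0 := fun i hi => by simp only [T, hB i hi, map_zero]
  have hjac := hJ u v w (-m - 1) L (-p - c)
  have hu_modes : ∀ i : ℕ, YM u (L + p * i) w = 0 := fun i =>
    hu _ (le_add_of_nonneg_right (by positivity))
  simp only [hu_modes, map_zero, smul_zero, finsum_zero, sub_zero] at hjac
  set C : ℕ → ℕ × ℕ → ℂ := fun i q => cbinom ((L : ℂ) / p) q.1 *
    cbinom ((m : ℂ) + i - (L : ℂ) / p) q.2
  have hLHS : ∑ᶠ q : ℕ × ℕ, (cbinom ((L : ℂ) / p) q.1 *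
        cbinom ((m : ℂ) + q.1 + q.2 - (L : ℂ) / p) q.2) •
        YM u (L - p * (m + 1 + q.1 + q.2)) (YM v (p * ((q.1 : ℤ) + q.2) - p - c) w)
      = ∑ᶠ q : ℕ × ℕ, C (q.1 + q.2) q • T (q.1 + q.2) := by
    refine finsum_congr fun q => ?_
    simp only [C, T, Nat.cast_add, add_assoc]
  have hcoeff : ∀ i, ∑ q ∈ antidiagonal i, C i q = (-1) ^ i * cbinom (-m - 1) i := fun i => by
    rw [sum_antidiagonal_cbinom_mul, add_sub_cancel, neg_one_pow_mul_cbinom_neg_sub_one]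
  rw [hLHS, finsum_smul_add_eq_sum_range_antidiagonal C T B hTB,
    ← finsum_eq_sum_range_of_eq_zero _ B fun i hi => by rw [hTB i hi, smul_zero]]
  simp only [hcoeff, T]
  convert hjac using 9 <;> push_cast <;> ring_nf

end TwistedJacobi

theorem statement19_general (p : ℕ) (hp : 0 < p) (𝒜 : VOA V) (ν : V ≃ₗ[ℂ] V) (ωp : ℂ)
    (YM : V →ₗ[ℂ] ℤ → Module.End ℂ M)
    (hT : TwTrunc YM) (hJ : TwJacobi p 𝒜 ν ωp YM) :
    ∃ (k : V → V → ℕ) (l : V → M → ℕ),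
      ∀ (u v : V) (w : M),
        (∀ k' : ℕ, k u v ≤ k' → TwWC p YM k' u v) ∧
        (∀ L : ℤ, (l u w : ℤ) ≤ L → TwWA p 𝒜 ν ωp YM L u v w) := by
  choose k hk using fun u v => 𝒜.exists_nat_forall_ge_Y_eq_zero (fun r => (ν ^ r) u) v p
  choose l hl using fun u w => exists_nat_forall_ge_of_exists_int (hT u w)
  refine ⟨k, l, fun u v w => ⟨fun k' hk' => ?_, fun L hL => ?_⟩⟩
  · exact twWC_of_twJacobi hJ fun r hr n hn =>
      hk u v r hr n (le_trans (by exact_mod_cast hk') hn)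
  · exact twWA_of_twJacobi hp hT hJ fun n hn => hl u w n (hL.trans hn)

/-- equations (4.21), (4.22).  Truncation and the twisted Jacobi
identity imply that there are `k(u,v) ∈ ℕ` and `l(u,w) ∈ (1/p)ℕ` such that weak
commutativity holds for every integral exponent `k ≥ k(u,v)` and twisted weak
associativity holds for every `l ∈ (1/p)ℤ` with `l ≥ l(u,w)`. -/
theorem statement19 (p : ℕ) (hp : 0 < p) (𝒜 : VOA V) (ν : V ≃ₗ[ℂ] V)
    (hν_vac : ν 𝒜.vac = 𝒜.vac) (hν_conf : ν 𝒜.conf = 𝒜.conf)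
    (hν_Y : ∀ (u : V) (n : ℤ) (v : V), ν (𝒜.Y u n v) = 𝒜.Y (ν u) n (ν v))
    (hν_per : ν ^ p = 1) (ωp : ℂ) (hωp : IsPrimitiveRoot ωp p)
    (YM : V →ₗ[ℂ] ℤ → Module.End ℂ M)
    (hT : TwTrunc YM) (hJ : TwJacobi p 𝒜 ν ωp YM) :
    ∃ (k : V → V → ℕ) (l : V → M → ℕ),
      ∀ (u v : V) (w : M),
        (∀ k' : ℕ, k u v ≤ k' → TwWC p YM k' u v) ∧
        (∀ L : ℤ, (l u w : ℤ) ≤ L → TwWA p 𝒜 ν ωp YM L u v w) :=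
  statement19_general p hp 𝒜 ν ωp YM hT hJ

end S19
end
end
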